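/- Let K be a perfect field with char K ≠ 2 and (V, σ) a symplectic K-vector space of dimension 2n. For every self-adjoint operator f : V → V there exists a Darboux basis of V such that the matrix of f in this basis is [[B, 0],[0, Bᵀ]] for some B ∈ M_{n×n}(K). -/

import Mathlib

/-!
Self-adjointness of `f` for an alternating form makes every cyclic subspace `K[f] v` totally
isotropic: `σ (g(f) v) (h(f) v) = σ ((g h)(f) v) v` is both symmetric and skew, and `2 ≠ 0`.
Take an irreducible factor `p` of the minimal polynomial and vectors `v`, `w` killed by `p(f)^k`
with `σ (p(f)^(k-1) v) w ≠ 0`. Every `g ∉ (p^k)` can be multiplied into `p^(k-1)` modulo `p^k`,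
so `K[f] v` and `K[f] w` pair non-degenerately: their sum is an `f`-invariant symplectic subspace,
and its orthogonal complement is again `f`-invariant and symplectic. Induction on the dimension
splits `V = L ⊕ M` into `f`-invariant Lagrangians. A basis of `L` together with the `σ`-dual basis
of `M` is a Darboux basis in which `f` is block diagonal, and self-adjointness makes the second
block the transpose of the first.
-/

/-- The σ-orthogonal complement `W^σ = {v ∈ V | σ(v,w) = 0 ∀ w ∈ W}`. -/
def sympOrth {K V : Type*} [Field K] [AddCommGroup V] [Module K V]
    (σ : LinearMap.BilinForm K V) (W : Submodule K V) : Submodule K V where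
  carrier := {v | ∀ w ∈ W, σ v w = 0}
  add_mem' := by intro a b ha hb w hw; simp [ha w hw, hb w hw]
  zero_mem' := by intro w hw; simp
  smul_mem' := by intro c a ha w hw; simp [ha w hw]

/-- `W` is a symplectic subspace: the restriction of `σ` to `W` is non-degenerate. -/
def IsSymplecticSubspace {K V : Type*} [Field K] [AddCommGroup V] [Module K V]
    (σ : LinearMap.BilinForm K V) (W : Submodule K V) : Prop :=
  ∀ v ∈ W, (∀ w ∈ W, σ v w = 0) → v = 0

/-- A Darboux basis: `σ(uᵢ,uⱼ)=0`, `σ(wᵢ,wⱼ)=0`, `σ(wᵢ,uⱼ)=δᵢⱼ`, where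
`uᵢ = b (Sum.inl i)` and `wᵢ = b (Sum.inr i)`. -/
def IsDarbouxBasis {K V : Type*} [Field K] [AddCommGroup V] [Module K V] {n : ℕ}
    (σ : LinearMap.BilinForm K V) (b : Module.Basis (Fin n ⊕ Fin n) K V) : Prop :=
  (∀ i j, σ (b (Sum.inl i)) (b (Sum.inl j)) = 0) ∧
  (∀ i j, σ (b (Sum.inr i)) (b (Sum.inr j)) = 0) ∧
  (∀ i j, σ (b (Sum.inr i)) (b (Sum.inl j)) = if i = j then 1 else 0)

section

open Polynomial Module

theorem exists_dvd_mul_sub_pow_pred {R : Type*} [EuclideanDomain R] {p g : R} (hp : Prime p)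
    {k : ℕ} (hg : ¬ p ^ k ∣ g) : ∃ c, p ^ k ∣ g * c - p ^ (k - 1) := by
  classical
  obtain ⟨j, hjk, hj⟩ := (dvd_prime_pow hp k).1 (EuclideanDomain.gcd_dvd_right g (p ^ k))
  have hj_le : j ≤ k - 1 := by
    refine Nat.le_sub_one_of_lt (lt_of_le_of_ne hjk ?_)
    rintro rfl
    exact hg (hj.symm.dvd.trans (EuclideanDomain.gcd_dvd_left g _))
  obtain ⟨t, ht⟩ := hj.dvd.trans (pow_dvd_pow p hj_le)
  refine ⟨EuclideanDomain.gcdA g (p ^ k) * t, -(EuclideanDomain.gcdB g (p ^ k) * t), ?_⟩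
  rw [ht, EuclideanDomain.gcd_eq_gcd_ab]
  ring

theorem not_pow_mul_dvd_pow_pred_mul_sq {R : Type*} [CommMonoidWithZero R] [IsCancelMulZero R]
    {p q : R} (hp : p ≠ 0) (hpq : ¬ p ∣ q) {k : ℕ} (hk : k ≠ 0) :
    ¬ p ^ k * q ∣ p ^ (k - 1) * q ^ 2 := by
  obtain ⟨j, rfl⟩ := Nat.exists_eq_succ_of_ne_zero hk
  rw [Nat.succ_sub_one, pow_succ, mul_assoc, sq]
  intro h
  have hq : q ≠ 0 := by rintro rfl; exact hpq (dvd_zero p)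
  exact hpq ((mul_dvd_mul_iff_right hq).1 ((mul_dvd_mul_iff_left (pow_ne_zero _ hp)).1 h))

variable {K V : Type*} [Field K] [AddCommGroup V] [Module K V]

section Polynomial

variable {f : End K V}

theorem coe_aeval_restrict_apply {U : Submodule K V} (hU : U ∈ f.invtSubmodule) (g : K[X])
    (x : U) : (aeval (f.restrict hU) g x : V) = aeval f g x := by
  induction g using Polynomial.induction_on' with
  | add p q hp hq => simp [hp, hq]
  | monomial n a => simp [aeval_monomial, Module.End.pow_restrict n hU, Module.End.mul_apply]

theorem aeval_apply_mem_of_mem_invtSubmodule {U : Submodule K V} (hU : U ∈ f.invtSubmodule)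
    (g : K[X]) {x : V} (hx : x ∈ U) : aeval f g x ∈ U :=
  coe_aeval_restrict_apply hU g ⟨x, hx⟩ ▸ (aeval (f.restrict hU) g ⟨x, hx⟩).2

theorem not_dvd_of_aeval_apply_ne_zero {q g : K[X]} {x : V} (hq : aeval f q x = 0)
    (hg : aeval f g x ≠ 0) : ¬ q ∣ g := by
  rintro ⟨d, rfl⟩
  rw [mul_comm, map_mul, Module.End.mul_apply, hq, map_zero] at hg
  exact hg rfl

noncomputable def cyclicSubmodule (f : End K V) (v : V) : Submodule K V :=
  LinearMap.range ((LinearMap.applyₗ v).comp (aeval f).toLinearMap)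

theorem mem_cyclicSubmodule {v x : V} :
    x ∈ cyclicSubmodule f v ↔ ∃ g : K[X], aeval f g v = x :=
  Iff.rfl

theorem self_mem_cyclicSubmodule (f : End K V) (v : V) : v ∈ cyclicSubmodule f v :=
  ⟨1, by simp⟩

theorem cyclicSubmodule_mem_invtSubmodule (f : End K V) (v : V) :
    cyclicSubmodule f v ∈ f.invtSubmodule := by
  rintro _ ⟨g, rfl⟩
  exact ⟨X * g, by simp [Module.End.mul_apply]⟩

theorem cyclicSubmodule_le {U : Submodule K V} (hU : U ∈ f.invtSubmodule) {v : V}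
    (hv : v ∈ U) : cyclicSubmodule f v ≤ U := by
  rintro _ ⟨g, rfl⟩
  exact aeval_apply_mem_of_mem_invtSubmodule hU g hv

end Polynomial

section Form

variable {σ : LinearMap.BilinForm K V} {f : End K V}

theorem LinearMap.IsSelfAdjoint.pow (hf : σ.IsSelfAdjoint f) (n : ℕ) :
    σ.IsSelfAdjoint ⇑(f ^ n) := by
  induction n with
  | zero => exact LinearMap.isAdjointPair_one
  | succ n ih =>
    have h := ih.mul hf
    rwa [← pow_succ, ← pow_succ'] at h

theorem LinearMap.IsSelfAdjoint.aeval (hf : σ.IsSelfAdjoint f) (g : K[X]) :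
    σ.IsSelfAdjoint (aeval f g) := by
  intro x y
  induction g using Polynomial.induction_on' with
  | add p q hp hq => simp [hp, hq]
  | monomial n a => simp [aeval_monomial, Module.End.mul_apply, hf.pow n x y]

theorem LinearMap.IsSelfAdjoint.orthogonal_mem_invtSubmodule (hf : σ.IsSelfAdjoint f)
    {W : Submodule K V} (hW : W ∈ f.invtSubmodule) : σ.orthogonal W ∈ f.invtSubmodule :=
  fun x hx y hy => (hf y x).symm.trans (hx _ (hW hy))

def IsTotallyIsotropic (σ : LinearMap.BilinForm K V) (W : Submodule K V) : Prop :=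
  ∀ x ∈ W, ∀ y ∈ W, σ x y = 0

theorem isSymplecticSubspace_top (hσ : σ.SeparatingLeft) : IsSymplecticSubspace σ ⊤ :=
  fun x _ hx => hσ x fun y => hx y trivial

theorem forall_mem_sup_apply_eq_zero {x : V} {L M : Submodule K V}
    (hL : ∀ y ∈ L, σ x y = 0) (hM : ∀ y ∈ M, σ x y = 0) : ∀ y ∈ L ⊔ M, σ x y = 0 :=
  sup_le (α := Submodule K V) (c := LinearMap.ker (σ x)) hL hM

theorem IsTotallyIsotropic.sup (hσ : σ.IsRefl) {L L' : Submodule K V}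
    (hL : IsTotallyIsotropic σ L) (hL' : IsTotallyIsotropic σ L') (h : L' ≤ σ.orthogonal L) :
    IsTotallyIsotropic σ (L ⊔ L') := by
  intro x hx
  obtain ⟨a, ha, a', ha', rfl⟩ := Submodule.mem_sup.1 hx
  refine forall_mem_sup_apply_eq_zero (fun y hy => ?_) (fun y hy => ?_)
  · rw [map_add, LinearMap.add_apply, hL a ha y hy, hσ _ _ (h ha' y hy), add_zero]
  · rw [map_add, LinearMap.add_apply, h hy a ha, hL' a' ha' y hy, add_zero]

theorem IsTotallyIsotropic.disjoint {L M : Submodule K V} (hL : IsTotallyIsotropic σ L)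
    (hM : IsTotallyIsotropic σ M) (hLM : IsSymplecticSubspace σ (L ⊔ M)) : Disjoint L M :=
  Submodule.disjoint_def.2 fun x hxL hxM => hLM x (Submodule.mem_sup_left hxL) <|
    forall_mem_sup_apply_eq_zero (hL x hxL) (hM x hxM)

theorem isSymplecticSubspace_sup {L M : Submodule K V} (hL : IsTotallyIsotropic σ L)
    (hM : IsTotallyIsotropic σ M) (hLM : ∀ x ∈ L, (∀ y ∈ M, σ x y = 0) → x = 0)
    (hML : ∀ y ∈ M, (∀ x ∈ L, σ y x = 0) → y = 0) : IsSymplecticSubspace σ (L ⊔ M) := by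
  intro z hz hz0
  obtain ⟨x, hx, y, hy, rfl⟩ := Submodule.mem_sup.1 hz
  have hx0 : x = 0 := hLM x hx fun m hm => by
    simpa [hM y hy m hm] using hz0 m (Submodule.mem_sup_right hm)
  have hy0 : y = 0 := hML y hy fun l hl => by
    simpa [hL x hx l hl] using hz0 l (Submodule.mem_sup_left hl)
  rw [hx0, hy0, add_zero]

theorem IsSymplecticSubspace.isCompl_orthogonal [FiniteDimensional K V] (halt : σ.IsAlt)
    {W : Submodule K V} (hW : IsSymplecticSubspace σ W) : IsCompl W (σ.orthogonal W) :=
  (σ.isCompl_orthogonal_iff_disjoint halt.isRefl).2 <| Submodule.disjoint_def.2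
    fun x hx hx' => hW x hx fun y hy => halt.eq_iff.1 (hx' y hy)

theorem sup_inf_orthogonal_eq [FiniteDimensional K V] (halt : σ.IsAlt) {U W : Submodule K V}
    (hW : IsSymplecticSubspace σ W) (hWU : W ≤ U) : W ⊔ (U ⊓ σ.orthogonal W) = U := by
  rw [inf_comm, ← sup_inf_assoc_of_le _ hWU, (hW.isCompl_orthogonal halt).sup_eq_top, top_inf_eq]

theorem IsSymplecticSubspace.inf_orthogonal [FiniteDimensional K V] (halt : σ.IsAlt)
    {U W : Submodule K V} (hU : IsSymplecticSubspace σ U) (hW : IsSymplecticSubspace σ W)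
    (hWU : W ≤ U) : IsSymplecticSubspace σ (U ⊓ σ.orthogonal W) := by
  intro x hx hx0
  refine hU x hx.1 fun y hy => ?_
  rw [← sup_inf_orthogonal_eq halt hW hWU] at hy
  exact forall_mem_sup_apply_eq_zero (fun y hy => halt.eq_iff.1 (hx.2 y hy)) hx0 y hy

theorem IsSymplecticSubspace.finrank_inf_orthogonal_lt [FiniteDimensional K V]
    (halt : σ.IsAlt) {U W : Submodule K V} (hW : IsSymplecticSubspace σ W) (hWU : W ≤ U)
    (hW0 : W ≠ ⊥) : finrank K ↥(U ⊓ σ.orthogonal W) < finrank K U :=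
  Submodule.finrank_lt_finrank_of_lt <| lt_of_le_of_ne inf_le_left fun h => hW0 <|
    (hW.isCompl_orthogonal halt).disjoint.eq_bot_of_le (h ▸ hWU |>.trans inf_le_right)

end Form

section SelfAdjoint

variable {σ : LinearMap.BilinForm K V} {f : End K V}

theorem isTotallyIsotropic_cyclicSubmodule (h2 : (2 : K) ≠ 0) (halt : σ.IsAlt)
    (hf : σ.IsSelfAdjoint f) (v : V) : IsTotallyIsotropic σ (cyclicSubmodule f v) := by
  intro x hx y hy
  obtain ⟨g, rfl⟩ := mem_cyclicSubmodule.1 hx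
  obtain ⟨h, rfl⟩ := mem_cyclicSubmodule.1 hy
  have hzero : ∀ r : K[X], σ (aeval f r v) v = 0 := fun r => by
    have hsymm := hf.aeval r v v
    have hskew := LinearMap.IsAlt.neg halt (aeval f r v) v
    exact mul_left_cancel₀ h2 (by linear_combination hsymm - hskew)
  rw [← hf.aeval h, ← Module.End.mul_apply, ← map_mul, hzero]

theorem exists_aeval_pairing_ne_zero (hf : σ.IsSelfAdjoint f) {p g : K[X]} (hp : Prime p) {k : ℕ}
    {v w : V} (hv : aeval f (p ^ k) v = 0) (hvw : σ (aeval f (p ^ (k - 1)) v) w ≠ 0)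
    (hg : ¬ p ^ k ∣ g) :
    ∃ c : K[X], σ (aeval f g v) (aeval f c w) ≠ 0 ∧ σ (aeval f c v) (aeval f g w) ≠ 0 := by
  obtain ⟨c, d, hcd⟩ := exists_dvd_mul_sub_pow_pred hp hg
  have hgc : aeval f (g * c) v = aeval f (p ^ (k - 1)) v := by
    rw [← sub_eq_zero, ← LinearMap.sub_apply, ← map_sub (aeval (R := K) f), hcd, mul_comm, map_mul,
      Module.End.mul_apply, hv, map_zero]
  refine ⟨c, ?_, ?_⟩
  · rwa [← hf.aeval c, ← Module.End.mul_apply, ← map_mul, mul_comm, hgc]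
  · rwa [← hf.aeval g, ← Module.End.mul_apply, ← map_mul, hgc]

theorem isSymplecticSubspace_cyclicSubmodule_sup (h2 : (2 : K) ≠ 0) (halt : σ.IsAlt)
    (hf : σ.IsSelfAdjoint f) {p : K[X]} (hp : Prime p) {k : ℕ} {v w : V}
    (hv : aeval f (p ^ k) v = 0) (hw : aeval f (p ^ k) w = 0)
    (hvw : σ (aeval f (p ^ (k - 1)) v) w ≠ 0) :
    IsSymplecticSubspace σ (cyclicSubmodule f v ⊔ cyclicSubmodule f w) := by
  refine isSymplecticSubspace_sup (isTotallyIsotropic_cyclicSubmodule h2 halt hf v)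
    (isTotallyIsotropic_cyclicSubmodule h2 halt hf w) ?_ ?_
  · intro x hx h0
    obtain ⟨g, rfl⟩ := mem_cyclicSubmodule.1 hx
    by_contra hx
    obtain ⟨c, hc, -⟩ :=
      exists_aeval_pairing_ne_zero hf hp hv hvw (not_dvd_of_aeval_apply_ne_zero hv hx)
    exact hc (h0 _ ⟨c, rfl⟩)
  · intro y hy h0
    obtain ⟨g, rfl⟩ := mem_cyclicSubmodule.1 hy
    by_contra hy
    obtain ⟨c, -, hc⟩ :=
      exists_aeval_pairing_ne_zero hf hp hv hvw (not_dvd_of_aeval_apply_ne_zero hw hy)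
    exact hc (halt.eq_iff.1 (h0 _ ⟨c, rfl⟩))

theorem exists_prime_pow_pairing_ne_zero [FiniteDimensional K V] (hf : σ.IsSelfAdjoint f)
    {U : Submodule K V} (hU : IsSymplecticSubspace σ U) (hUf : U ∈ f.invtSubmodule)
    (hU0 : U ≠ ⊥) :
    ∃ p : K[X], Prime p ∧ ∃ (k : ℕ) (v w : V), v ∈ U ∧ w ∈ U ∧ aeval f (p ^ k) v = 0 ∧
      aeval f (p ^ k) w = 0 ∧ σ (aeval f (p ^ (k - 1)) v) w ≠ 0 := by
  set fU := f.restrict hUf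
  have : Nontrivial U := Submodule.nontrivial_iff_ne_bot.2 hU0
  have hμ0 : minpoly K fU ≠ 0 := minpoly.ne_zero (Algebra.IsIntegral.isIntegral fU)
  obtain ⟨p, hp, hpμ⟩ := WfDvdMonoid.exists_irreducible_factor (minpoly.not_isUnit K fU) hμ0
  obtain ⟨k, q, hpq, hμ⟩ := WfDvdMonoid.max_power_factor hμ0 hp
  have hk : k ≠ 0 := by
    rintro rfl
    rw [pow_zero, one_mul] at hμ
    exact hpq (hμ ▸ hpμ)
  obtain ⟨u, hu⟩ : ∃ u : U, aeval fU (p ^ (k - 1) * q ^ 2) u ≠ 0 := by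
    by_contra! h
    refine not_pow_mul_dvd_pow_pred_mul_sq hp.ne_zero hpq hk ?_
    exact hμ ▸ minpoly.dvd K fU (LinearMap.ext h)
  obtain ⟨w', hw'U, hw'⟩ : ∃ w' ∈ U, σ (aeval f (p ^ (k - 1) * q ^ 2) u) w' ≠ 0 := by
    by_contra! h
    refine hu (Subtype.ext ?_)
    rw [coe_aeval_restrict_apply]
    exact hU _ (aeval_apply_mem_of_mem_invtSubmodule hUf _ u.2) h
  have hkill : ∀ x ∈ U, aeval f (p ^ k) (aeval f q x) = 0 := fun x hx => by
    rw [← Module.End.mul_apply, ← map_mul, ← hμ, ← coe_aeval_restrict_apply hUf _ ⟨x, hx⟩,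
      minpoly.aeval, LinearMap.zero_apply, Submodule.coe_zero]
  -- `p ^ k * q` kills `U`, and the pairing of `v = q(f) u` with `w = q(f) w'` is `hw'`
  refine ⟨p, hp.prime, k, aeval f q u, aeval f q w', aeval_apply_mem_of_mem_invtSubmodule hUf _ u.2,
    aeval_apply_mem_of_mem_invtSubmodule hUf _ hw'U, hkill u u.2, hkill w' hw'U, ?_⟩
  rwa [← hf.aeval q, ← Module.End.mul_apply, ← map_mul, ← Module.End.mul_apply, ← map_mul,
    show q * p ^ (k - 1) * q = p ^ (k - 1) * q ^ 2 by ring]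

theorem exists_isSymplecticSubspace_cyclicSubmodule_sup [FiniteDimensional K V]
    (h2 : (2 : K) ≠ 0) (halt : σ.IsAlt) (hf : σ.IsSelfAdjoint f) {U : Submodule K V}
    (hU : IsSymplecticSubspace σ U) (hUf : U ∈ f.invtSubmodule) (hU0 : U ≠ ⊥) :
    ∃ v ∈ U, ∃ w ∈ U, v ≠ 0 ∧
      IsSymplecticSubspace σ (cyclicSubmodule f v ⊔ cyclicSubmodule f w) := by
  obtain ⟨p, hp, k, v, w, hvU, hwU, hv, hw, hvw⟩ :=
    exists_prime_pow_pairing_ne_zero hf hU hUf hU0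
  refine ⟨v, hvU, w, hwU, ?_, isSymplecticSubspace_cyclicSubmodule_sup h2 halt hf hp hv hw hvw⟩
  rintro rfl
  simp at hvw

end SelfAdjoint

section Splitting

variable [FiniteDimensional K V] {σ : LinearMap.BilinForm K V} {f : End K V}

theorem exists_isTotallyIsotropic_sup_eq (h2 : (2 : K) ≠ 0) (halt : σ.IsAlt)
    (hf : σ.IsSelfAdjoint f) {U : Submodule K V} (hU : IsSymplecticSubspace σ U)
    (hUf : U ∈ f.invtSubmodule) :
    ∃ L M : Submodule K V, L ⊔ M = U ∧ IsTotallyIsotropic σ L ∧ IsTotallyIsotropic σ M ∧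
      L ∈ f.invtSubmodule ∧ M ∈ f.invtSubmodule := by
  induction hn : finrank K U using Nat.strong_induction_on generalizing U with
  | _ n ih =>
  rcases eq_or_ne U ⊥ with rfl | hU0
  · exact ⟨⊥, ⊥, bot_sup_eq ⊥, by simp [IsTotallyIsotropic], by simp [IsTotallyIsotropic],
      Module.End.invtSubmodule.bot_mem f, Module.End.invtSubmodule.bot_mem f⟩
  obtain ⟨v, hvU, w, hwU, hv0, hW⟩ :=
    exists_isSymplecticSubspace_cyclicSubmodule_sup h2 halt hf hU hUf hU0
  set W := cyclicSubmodule f v ⊔ cyclicSubmodule f w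
  have hWf : W ∈ f.invtSubmodule := Sublattice.sup_mem
    (cyclicSubmodule_mem_invtSubmodule f v) (cyclicSubmodule_mem_invtSubmodule f w)
  have hWU : W ≤ U := sup_le (cyclicSubmodule_le hUf hvU) (cyclicSubmodule_le hUf hwU)
  have hW0 : W ≠ ⊥ :=
    (Submodule.ne_bot_iff W).2 ⟨v, Submodule.mem_sup_left (self_mem_cyclicSubmodule f v), hv0⟩
  obtain ⟨L', M', hsup, hL', hM', hL'f, hM'f⟩ :=
    ih _ (hn ▸ hW.finrank_inf_orthogonal_lt halt hWU hW0) (hU.inf_orthogonal halt hW hWU)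
      (Sublattice.inf_mem hUf (hf.orthogonal_mem_invtSubmodule hWf)) rfl
  have hL'W : L' ≤ σ.orthogonal W := le_sup_left.trans (hsup.le.trans inf_le_right)
  have hM'W : M' ≤ σ.orthogonal W := le_sup_right.trans (hsup.le.trans inf_le_right)
  refine ⟨cyclicSubmodule f v ⊔ L', cyclicSubmodule f w ⊔ M', ?_, ?_, ?_,
    Sublattice.sup_mem (cyclicSubmodule_mem_invtSubmodule f v) hL'f,
    Sublattice.sup_mem (cyclicSubmodule_mem_invtSubmodule f w) hM'f⟩
  · rw [sup_sup_sup_comm, hsup, sup_inf_orthogonal_eq halt hW hWU]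
  · exact (isTotallyIsotropic_cyclicSubmodule h2 halt hf v).sup halt.isRefl hL'
      (hL'W.trans (σ.orthogonal_le le_sup_left))
  · exact (isTotallyIsotropic_cyclicSubmodule h2 halt hf w).sup halt.isRefl hM'
      (hM'W.trans (σ.orthogonal_le le_sup_right))

end Splitting

section Darboux

variable {n : ℕ} {σ : LinearMap.BilinForm K V} {b : Basis (Fin n ⊕ Fin n) K V}

theorem IsDarbouxBasis.repr_inl (hb : IsDarbouxBasis σ b) (x : V) (i : Fin n) :
    b.repr x (Sum.inl i) = σ (b (Sum.inr i)) x := by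
  have : b.coord (Sum.inl i) = σ (b (Sum.inr i)) := b.ext fun j => by
    rcases j with j | j <;> simp [Finsupp.single_apply, hb.2.1, hb.2.2, eq_comm]
  exact LinearMap.congr_fun this x

theorem IsDarbouxBasis.repr_inr (hb : IsDarbouxBasis σ b) (x : V) (i : Fin n) :
    b.repr x (Sum.inr i) = σ x (b (Sum.inl i)) := by
  have : b.coord (Sum.inr i) = σ.flip (b (Sum.inl i)) := b.ext fun j => by
    rcases j with j | j <;> simp [Finsupp.single_apply, hb.1, hb.2.2, eq_comm]
  exact LinearMap.congr_fun this x

theorem IsDarbouxBasis.toMatrix_eq_fromBlocks (hb : IsDarbouxBasis σ b) {f : End K V}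
    (hf : σ.IsSelfAdjoint f) (hu : ∀ i j, σ (f (b (Sum.inl i))) (b (Sum.inl j)) = 0)
    (hw : ∀ i j, σ (b (Sum.inr i)) (f (b (Sum.inr j))) = 0) :
    LinearMap.toMatrix b b f = Matrix.fromBlocks
      (Matrix.of fun i j => σ (b (Sum.inr i)) (f (b (Sum.inl j)))) 0 0
      (Matrix.of fun i j => σ (b (Sum.inr i)) (f (b (Sum.inl j)))).transpose := by
  ext (i | i) (j | j) <;>
    simp [LinearMap.toMatrix_apply, hb.repr_inl, hb.repr_inr, hu, hw, hf _ (b _)]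

theorem exists_isDarbouxBasis_of_sup_eq_top [FiniteDimensional K V] (halt : σ.IsAlt)
    (hσ : σ.SeparatingLeft) {L M : Submodule K V} (hLM : L ⊔ M = ⊤)
    (hL : IsTotallyIsotropic σ L) (hM : IsTotallyIsotropic σ M) (hn : finrank K V = 2 * n) :
    ∃ b : Basis (Fin n ⊕ Fin n) K V, IsDarbouxBasis σ b ∧
      (∀ i, b (Sum.inl i) ∈ L) ∧ (∀ i, b (Sum.inr i) ∈ M) := by
  have hsymp : IsSymplecticSubspace σ (L ⊔ M) := hLM ▸ isSymplecticSubspace_top hσ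
  have hcompl : IsCompl L M := ⟨hL.disjoint hM hsymp, codisjoint_iff.2 hLM⟩
  let φ := σ.domRestrict₁₂ M L
  have : φ.IsPerfPair := .of_injective
    ((injective_iff_map_eq_zero φ).2 fun m hm => Subtype.ext <| hsymp m (hLM ▸ trivial) <|
      forall_mem_sup_apply_eq_zero (fun l hl => LinearMap.congr_fun hm ⟨l, hl⟩) (hM m m.2))
    ((injective_iff_map_eq_zero φ.flip).2 fun l hl => Subtype.ext <| hsymp l (hLM ▸ trivial) <|
      forall_mem_sup_apply_eq_zero (hL l l.2)
        fun m hm => halt.eq_iff.1 (LinearMap.congr_fun hl ⟨m, hm⟩))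
  have hLn : finrank K L = n := by
    have hML := finrank_of_isPerfPair φ
    have hsum := Submodule.finrank_add_eq_of_isCompl hcompl
    omega
  let bL := finBasisOfFinrankEq K L hLn
  let bM := bL.dualBasis.map φ.toPerfPair.symm
  have hpair : ∀ i j, σ (bM i) (bL j) = if i = j then 1 else 0 := fun i j => by
    calc σ (bM i) (bL j) = φ (bM i) (bL j) := rfl
      _ = bL.dualBasis i (bL j) := by simp [bM]
      _ = _ := by simp [Finsupp.single_apply, eq_comm]
  let b := (bL.prod bM).map (Submodule.prodEquivOfIsCompl L M hcompl)
  have hbL : ∀ i, b (Sum.inl i) = bL i := by simp [b]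
  have hbM : ∀ i, b (Sum.inr i) = bM i := by simp [b]
  refine ⟨b, ⟨fun i j => ?_, fun i j => ?_, fun i j => ?_⟩, fun i => ?_, fun i => ?_⟩
  · rw [hbL, hbL]; exact hL _ (bL i).2 _ (bL j).2
  · rw [hbM, hbM]; exact hM _ (bM i).2 _ (bM j).2
  · rw [hbM, hbL]; exact hpair i j
  · rw [hbL]; exact (bL i).2
  · rw [hbM]; exact (bM i).2

end Darboux

end

theorem perfect_selfAdjoint_block_pair_general
    {K V : Type*} [Field K] [AddCommGroup V] [Module K V]
    [FiniteDimensional K V]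
    (hchar : (2 : K) ≠ 0) (n : ℕ)
    (hdim : Module.finrank K V = 2 * n)
    (σ : LinearMap.BilinForm K V) (halt : ∀ v, σ v v = 0) (hnd : σ.Nondegenerate)
    (f : Module.End K V) (hsa : ∀ v w, σ v (f w) = σ (f v) w) :
    ∃ b : Module.Basis (Fin n ⊕ Fin n) K V, IsDarbouxBasis σ b ∧
      ∃ B : Matrix (Fin n) (Fin n) K,
        LinearMap.toMatrix b b f = Matrix.fromBlocks B 0 0 B.transpose := by
  have hf : σ.IsSelfAdjoint f := fun v w => (hsa v w).symm
  obtain ⟨L, M, hLM, hL, hM, hLf, hMf⟩ := exists_isTotallyIsotropic_sup_eq hchar halt hf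
    (isSymplecticSubspace_top hnd.1) (Module.End.invtSubmodule.top_mem f)
  obtain ⟨b, hb, hbL, hbM⟩ := exists_isDarbouxBasis_of_sup_eq_top halt hnd.1 hLM hL hM hdim
  exact ⟨b, hb, _, hb.toMatrix_eq_fromBlocks hf (fun i j => hL _ (hLf (hbL i)) _ (hbL j))
    (fun i j => hM _ (hbM i) _ (hMf (hbM j)))⟩

theorem perfect_selfAdjoint_block_pair
    {K V : Type*} [Field K] [PerfectField K] [AddCommGroup V] [Module K V]
    [FiniteDimensional K V]
    (hchar : (2 : K) ≠ 0) (n : ℕ) (hn : 0 < n)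
    (hdim : Module.finrank K V = 2 * n)
    (σ : LinearMap.BilinForm K V) (halt : ∀ v, σ v v = 0) (hnd : σ.Nondegenerate)
    (f : Module.End K V) (hsa : ∀ v w, σ v (f w) = σ (f v) w) :
    ∃ b : Module.Basis (Fin n ⊕ Fin n) K V, IsDarbouxBasis σ b ∧
      ∃ B : Matrix (Fin n) (Fin n) K,
        LinearMap.toMatrix b b f = Matrix.fromBlocks B 0 0 B.transpose :=
  perfect_selfAdjoint_block_pair_general hchar n hdim σ halt hnd f hsa
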